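/- Let A ∈ ℝ^{n×d} with rank(A) ≥ k, and let R ∈ ℝ^{d×k} have orthonormal columns with d₂(R, V_{A,k}) ≤ ν. Then σ_min(AR) ≥ σ_k(A)·(√(1−ν²) − ν). Moreover, if ν < 1 then rank(AR) = k. -/

import Mathlib

open Matrix MeasureTheory

noncomputable section

/-- Euclidean norm of a vector in `ℝ^n`. -/
def vnorm {n : ℕ} (v : Fin n → ℝ) : ℝ := Real.sqrt (∑ i, v i ^ 2)

/-- Spectral norm of a matrix (operator norm as a map between Euclidean spaces). -/
def spec {m n : ℕ} (M : Matrix (Fin m) (Fin n) ℝ) : ℝ :=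
  ‖LinearMap.toContinuousLinearMap (Matrix.toEuclideanLin M)‖

/-- The four Moore-Penrose conditions. -/
def IsMP {m n : ℕ} (X : Matrix (Fin m) (Fin n) ℝ) (Y : Matrix (Fin n) (Fin m) ℝ) : Prop :=
  X * Y * X = X ∧ Y * X * Y = Y ∧ (X * Y)ᵀ = X * Y ∧ (Y * X)ᵀ = Y * X

/-- The Moore-Penrose pseudoinverse (it always exists and is unique, so this choice-based
definition picks out exactly the Moore-Penrose pseudoinverse). -/
def pinv {m n : ℕ} (X : Matrix (Fin m) (Fin n) ℝ) : Matrix (Fin n) (Fin m) ℝ := by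
  classical exact if h : ∃ Y, IsMP X Y then h.choose else 0

/-- Orthogonal projection onto the column space of a matrix: `P_X = X X⁺`. -/
def projCol {m n : ℕ} (X : Matrix (Fin m) (Fin n) ℝ) : Matrix (Fin m) (Fin m) ℝ := X * pinv X

/-- Distance between column spaces: `d₂(U, W) = ‖P_U - P_W‖₂`. -/
def d2 {m p q : ℕ} (U : Matrix (Fin m) (Fin p) ℝ) (W : Matrix (Fin m) (Fin q) ℝ) : ℝ :=
  spec (projCol U - projCol W)

/-- `(U, s, V)` is a thin SVD of `X`: orthonormal columns, nonincreasing nonnegative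
singular values, and `X = U (diag s) Vᵀ`. -/
def IsThinSVD {m n p : ℕ} (X : Matrix (Fin m) (Fin n) ℝ) (U : Matrix (Fin m) (Fin p) ℝ)
    (s : Fin p → ℝ) (V : Matrix (Fin n) (Fin p) ℝ) : Prop :=
  Uᵀ * U = 1 ∧ Vᵀ * V = 1 ∧ Antitone s ∧ (∀ i, 0 ≤ s i) ∧ X = U * Matrix.diagonal s * Vᵀ

/-- The matrix of the first `k` columns. -/
def firstCols {m p : ℕ} (U : Matrix (Fin m) (Fin p) ℝ) (k : ℕ) (h : k ≤ p) :
    Matrix (Fin m) (Fin k) ℝ := U.submatrix id (Fin.castLE h)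

/-- The matrix of the remaining columns (columns `k+1, …, p` in 1-based indexing). -/
def tailCols {m p : ℕ} (U : Matrix (Fin m) (Fin p) ℝ) (k : ℕ) (h : k ≤ p) :
    Matrix (Fin m) (Fin (p - k)) ℝ :=
  U.submatrix id (fun j => ⟨k + j.1, by have := j.2; omega⟩)

/-- `sv s i` is the `i`-th singular value (1-indexed), `0` past the end. -/
def sv {p : ℕ} (s : Fin p → ℝ) (i : ℕ) : ℝ := by
  classical exact if h : i - 1 < p then s ⟨i - 1, h⟩ else 0

end

noncomputable section

/-- Smallest singular value of a matrix with at least as many rows as columns,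
characterized as the infimum of `‖M x‖` over unit vectors `x`. -/
def smin {m n : ℕ} (M : Matrix (Fin m) (Fin n) ℝ) : ℝ :=
  sInf ((fun x => vnorm (M.mulVec x)) '' {x | vnorm x = 1})

end

/-!
For `x ∈ ℝᵏ` put `y = R x`, so `‖y‖ = ‖x‖` and `P_R y = y`. The component of `y` orthogonal to
the span of `V_{A,k}` is then `(P_R − P_{V_{A,k}}) y`, of norm at most `ν ‖x‖`, so by Pythagoras
`‖V_{A,k}ᵀ y‖ ≥ √(1 − ν²) ‖x‖`. Since `σ₁(A), …, σ_k(A) ≥ σ_k(A)`, also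
`‖A y‖ ≥ σ_k(A) ‖V_{A,k}ᵀ y‖`. Hence `‖A R x‖ ≥ σ_k(A) √(1 − ν²) ‖x‖`, which bounds `σ_min(AR)`
and, when `ν < 1` and `σ_k(A) > 0` (as `rank A ≥ k`), makes `AR` injective.
-/

section VectorNorm

variable {m n : ℕ}

lemma vnorm_nonneg (v : Fin n → ℝ) : 0 ≤ vnorm v := Real.sqrt_nonneg _

lemma vnorm_sq (v : Fin n → ℝ) : vnorm v ^ 2 = v ⬝ᵥ v := by
  rw [vnorm, Real.sq_sqrt (Finset.sum_nonneg fun i _ => sq_nonneg _)]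
  simp only [dotProduct, sq]

lemma vnorm_eq_zero {v : Fin n → ℝ} : vnorm v = 0 ↔ v = 0 := by
  rw [← dotProduct_self_eq_zero, ← vnorm_sq, sq_eq_zero_iff]

lemma vnorm_mulVec_le_spec (M : Matrix (Fin m) (Fin n) ℝ) (v : Fin n → ℝ) :
    vnorm (M *ᵥ v) ≤ spec M * vnorm v := by
  have hnorm : ∀ {k : ℕ} (w : Fin k → ℝ), vnorm w = ‖WithLp.toLp 2 w‖ := fun w => by
    simp [vnorm, EuclideanSpace.norm_eq, sq_abs]
  rw [hnorm, hnorm]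
  exact (LinearMap.toContinuousLinearMap (Matrix.toEuclideanLin M)).le_opNorm (WithLp.toLp 2 v)

lemma dotProduct_mulVec_self_of_orthonormal {Q : Matrix (Fin m) (Fin n) ℝ} (hQ : Qᵀ * Q = 1)
    (v : Fin n → ℝ) : (Q *ᵥ v) ⬝ᵥ (Q *ᵥ v) = v ⬝ᵥ v := by
  rw [dotProduct_mulVec, ← mulVec_transpose, mulVec_mulVec, hQ, one_mulVec]

lemma vnorm_mulVec_of_orthonormal {Q : Matrix (Fin m) (Fin n) ℝ} (hQ : Qᵀ * Q = 1)
    (v : Fin n → ℝ) : vnorm (Q *ᵥ v) = vnorm v := by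
  rw [← Real.sqrt_sq (vnorm_nonneg (Q *ᵥ v)), vnorm_sq, dotProduct_mulVec_self_of_orthonormal hQ,
    ← vnorm_sq, Real.sqrt_sq (vnorm_nonneg v)]

lemma vnorm_sq_transpose_mulVec_add_vnorm_sq_sub {Q : Matrix (Fin m) (Fin n) ℝ}
    (hQ : Qᵀ * Q = 1) (y : Fin m → ℝ) :
    vnorm (Qᵀ *ᵥ y) ^ 2 + vnorm (y - Q *ᵥ (Qᵀ *ᵥ y)) ^ 2 = vnorm y ^ 2 := by
  set b := Qᵀ *ᵥ y
  have hb : y ⬝ᵥ (Q *ᵥ b) = b ⬝ᵥ b := by rw [dotProduct_mulVec, ← mulVec_transpose]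
  simp only [vnorm_sq, sub_dotProduct, dotProduct_sub, dotProduct_comm (Q *ᵥ b) y, hb,
    dotProduct_mulVec_self_of_orthonormal hQ]
  ring

end VectorNorm

section Projection

variable {m n : ℕ}

lemma IsMP.unique {X : Matrix (Fin m) (Fin n) ℝ} {Y Z : Matrix (Fin n) (Fin m) ℝ}
    (hY : IsMP X Y) (hZ : IsMP X Z) : Y = Z := by
  obtain ⟨hY1, hY2, hY3, hY4⟩ := hY
  obtain ⟨hZ1, hZ2, hZ3, hZ4⟩ := hZ
  have hXY : X * Y = X * Z :=
    calc X * Y = (X * Z * (X * Y))ᵀ := by rw [← Matrix.mul_assoc, hZ1, hY3]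
      _ = X * Y * (X * Z) := by rw [transpose_mul, hY3, hZ3]
      _ = X * Z := by rw [← Matrix.mul_assoc, hY1]
  have hYX : Y * X = Z * X :=
    calc Y * X = (Y * X * (Z * X))ᵀ := by rw [Matrix.mul_assoc, ← Matrix.mul_assoc X, hZ1, hY4]
      _ = Z * X * (Y * X) := by rw [transpose_mul, hY4, hZ4]
      _ = Z * X := by rw [Matrix.mul_assoc, ← Matrix.mul_assoc X, hY1]
  rw [← hY2, Matrix.mul_assoc, hXY, ← Matrix.mul_assoc, hYX, hZ2]

lemma isMP_transpose_of_orthonormal {Q : Matrix (Fin m) (Fin n) ℝ} (hQ : Qᵀ * Q = 1) :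
    IsMP Q Qᵀ := by
  refine ⟨?_, ?_, ?_, ?_⟩
  · rw [Matrix.mul_assoc, hQ, Matrix.mul_one]
  · rw [hQ, Matrix.one_mul]
  · rw [transpose_mul, transpose_transpose]
  · rw [hQ, transpose_one]

lemma pinv_eq_of_isMP {X : Matrix (Fin m) (Fin n) ℝ} {Y : Matrix (Fin n) (Fin m) ℝ}
    (hY : IsMP X Y) : pinv X = Y := by
  have hex : ∃ Y, IsMP X Y := ⟨Y, hY⟩
  rw [pinv, dif_pos hex]
  exact hex.choose_spec.unique hY

lemma projCol_of_orthonormal {Q : Matrix (Fin m) (Fin n) ℝ} (hQ : Qᵀ * Q = 1) :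
    projCol Q = Q * Qᵀ := by
  rw [projCol, pinv_eq_of_isMP (isMP_transpose_of_orthonormal hQ)]

lemma d2_nonneg {p q : ℕ} (U : Matrix (Fin m) (Fin p) ℝ) (W : Matrix (Fin m) (Fin q) ℝ) :
    0 ≤ d2 U W :=
  norm_nonneg _

lemma vnorm_sub_mulVec_transpose_mulVec_le_d2 {k l : ℕ} {R : Matrix (Fin m) (Fin k) ℝ}
    {W : Matrix (Fin m) (Fin l) ℝ} (hR : Rᵀ * R = 1) (hW : Wᵀ * W = 1) (x : Fin k → ℝ) :
    vnorm (R *ᵥ x - W *ᵥ (Wᵀ *ᵥ (R *ᵥ x))) ≤ d2 R W * vnorm x := by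
  have hres : R *ᵥ x - W *ᵥ (Wᵀ *ᵥ (R *ᵥ x)) = (projCol R - projCol W) *ᵥ (R *ᵥ x) := by
    simp only [projCol_of_orthonormal hR, projCol_of_orthonormal hW, sub_mulVec,
      ← mulVec_mulVec]
    rw [mulVec_mulVec x Rᵀ, hR, one_mulVec]
  rw [hres, ← vnorm_mulVec_of_orthonormal hR x]
  exact vnorm_mulVec_le_spec _ _

lemma sqrt_one_sub_sq_mul_vnorm_le {k l : ℕ} {R : Matrix (Fin m) (Fin k) ℝ}
    {W : Matrix (Fin m) (Fin l) ℝ} (hR : Rᵀ * R = 1) (hW : Wᵀ * W = 1) {ν : ℝ}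
    (hdist : d2 R W ≤ ν) (x : Fin k → ℝ) :
    √(1 - ν ^ 2) * vnorm x ≤ vnorm (Wᵀ *ᵥ (R *ᵥ x)) := by
  have hres : vnorm (R *ᵥ x - W *ᵥ (Wᵀ *ᵥ (R *ᵥ x))) ≤ ν * vnorm x :=
    (vnorm_sub_mulVec_transpose_mulVec_le_d2 hR hW x).trans
      (mul_le_mul_of_nonneg_right hdist (vnorm_nonneg x))
  have hpyth := vnorm_sq_transpose_mulVec_add_vnorm_sq_sub hW (R *ᵥ x)
  rw [vnorm_mulVec_of_orthonormal hR] at hpyth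
  have hsq : (1 - ν ^ 2) * vnorm x ^ 2 ≤ vnorm (Wᵀ *ᵥ (R *ᵥ x)) ^ 2 := by
    nlinarith [pow_le_pow_left₀ (vnorm_nonneg _) hres 2]
  calc √(1 - ν ^ 2) * vnorm x = √((1 - ν ^ 2) * vnorm x ^ 2) := by
        rw [Real.sqrt_mul' _ (sq_nonneg _), Real.sqrt_sq (vnorm_nonneg x)]
    _ ≤ √(vnorm (Wᵀ *ᵥ (R *ᵥ x)) ^ 2) := Real.sqrt_le_sqrt hsq
    _ = vnorm (Wᵀ *ᵥ (R *ᵥ x)) := Real.sqrt_sq (vnorm_nonneg _)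

end Projection

section SingularValues

variable {m n p k : ℕ} {s : Fin p → ℝ}

lemma sv_nonneg (hs : ∀ i, 0 ≤ s i) (k : ℕ) : 0 ≤ sv s k := by
  unfold sv
  split_ifs
  exacts [hs _, le_rfl]

lemma sv_le_of_lt (hs : Antitone s) (hk : k ≤ p) (i : Fin p) (hi : i.val < k) : sv s k ≤ s i := by
  rw [sv, dif_pos (by omega)]
  exact hs (Fin.le_def.2 (by simp only; omega))

lemma firstCols_transpose_mul_self {V : Matrix (Fin m) (Fin p) ℝ} (hV : Vᵀ * V = 1)
    (hk : k ≤ p) : (firstCols V k hk)ᵀ * firstCols V k hk = 1 := by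
  ext i j
  simpa [firstCols, mul_apply, one_apply, Fin.castLE_inj] using
    congrFun (congrFun hV (Fin.castLE hk i)) (Fin.castLE hk j)

lemma IsThinSVD.sv_mul_vnorm_le {A : Matrix (Fin m) (Fin n) ℝ} {U : Matrix (Fin m) (Fin p) ℝ}
    {V : Matrix (Fin n) (Fin p) ℝ} (hA : IsThinSVD A U s V) (hk : k ≤ p) (y : Fin n → ℝ) :
    sv s k * vnorm ((firstCols V k hk)ᵀ *ᵥ y) ≤ vnorm (A *ᵥ y) := by
  obtain ⟨hU, -, hanti, hs, rfl⟩ := hA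
  set z := Vᵀ *ᵥ y
  have hAy : (U * diagonal s * Vᵀ) *ᵥ y = U *ᵥ (diagonal s *ᵥ z) := by
    simp only [z, mulVec_mulVec, Matrix.mul_assoc]
  have hVky : (firstCols V k hk)ᵀ *ᵥ y = fun j => z (Fin.castLE hk j) := by
    ext j
    simp [z, firstCols, mulVec, dotProduct]
  rw [hAy, vnorm_mulVec_of_orthonormal hU, hVky]
  refine le_of_pow_le_pow_left₀ two_ne_zero (vnorm_nonneg _) ?_
  rw [mul_pow, vnorm_sq, vnorm_sq]
  simp only [dotProduct, mulVec_diagonal, Finset.mul_sum]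
  calc ∑ j : Fin k, sv s k ^ 2 * (z (Fin.castLE hk j) * z (Fin.castLE hk j))
      ≤ ∑ j : Fin k, s (Fin.castLE hk j) * z (Fin.castLE hk j) *
          (s (Fin.castLE hk j) * z (Fin.castLE hk j)) := by
        refine Finset.sum_le_sum fun j _ => ?_
        have hle := sv_le_of_lt hanti hk (Fin.castLE hk j) j.2
        have h0 := sv_nonneg hs k
        nlinarith [mul_self_nonneg (z (Fin.castLE hk j)), mul_le_mul hle hle h0 (h0.trans hle)]
    _ ≤ ∑ i, s i * z i * (s i * z i) :=
        (Finset.sum_map _ (Fin.castLEEmb hk) fun i => s i * z i * (s i * z i)).symm.trans_le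
          (Finset.sum_le_univ_sum_of_nonneg fun i => mul_self_nonneg _)

lemma IsThinSVD.sv_pos_of_le_rank {A : Matrix (Fin m) (Fin n) ℝ} {U : Matrix (Fin m) (Fin p) ℝ}
    {V : Matrix (Fin n) (Fin p) ℝ} (hA : IsThinSVD A U s V) (hk0 : 0 < k) (hk : k ≤ A.rank) :
    0 < sv s k := by
  obtain ⟨-, -, hanti, hs, rfl⟩ := hA
  by_contra! hsv
  -- all singular values from the `k`-th on vanish, so `diagonal s` has rank `< k`
  have hsupp : ∀ i, s i ≠ 0 → i.val < k - 1 := by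
    intro i hi
    by_contra! hik
    have hsk : sv s k = s ⟨k - 1, by omega⟩ := by rw [sv, dif_pos (by omega)]
    exact hi (le_antisymm ((hanti (Fin.le_def.2 hik)).trans (hsk ▸ hsv)) (hs i))
  have hcard : Fintype.card {i // s i ≠ 0} ≤ k - 1 :=
    calc Fintype.card {i // s i ≠ 0} ≤ Fintype.card {i : Fin p // i.val < k - 1} :=
          Fintype.card_subtype_mono _ _ hsupp
      _ = min p (k - 1) := by rw [Fintype.card_subtype, Fin.card_filter_val_lt]
      _ ≤ k - 1 := min_le_right _ _
  have hrank : (U * diagonal s * Vᵀ).rank ≤ Fintype.card {i // s i ≠ 0} :=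
    (rank_mul_le_left _ _).trans ((rank_mul_le_right _ _).trans (rank_diagonal s).le)
  omega

end SingularValues

section SmallestSingularValue

variable {m k : ℕ} {c : ℝ}

lemma le_smin (hk : 0 < k) {M : Matrix (Fin m) (Fin k) ℝ}
    (h : ∀ x, c * vnorm x ≤ vnorm (M *ᵥ x)) : c ≤ smin M := by
  have hunit : vnorm (Pi.single (⟨0, hk⟩ : Fin k) (1 : ℝ)) = 1 := by
    simp [vnorm, Pi.single_apply]
  refine le_csInf ⟨_, _, hunit, rfl⟩ ?_
  rintro _ ⟨x, hx : vnorm x = 1, rfl⟩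
  simpa [hx] using h x

lemma rank_eq_of_mul_vnorm_le {M : Matrix (Fin m) (Fin k) ℝ} (hc : 0 < c)
    (h : ∀ x, c * vnorm x ≤ vnorm (M *ᵥ x)) : M.rank = k := by
  have hinj : Function.Injective M.mulVecLin := by
    refine (injective_iff_map_eq_zero _).2 fun x hx => vnorm_eq_zero.1 ?_
    rw [mulVecLin_apply] at hx
    have := h x
    rw [hx, vnorm_eq_zero.2 rfl] at this
    nlinarith [vnorm_nonneg x]
  rw [Matrix.rank, LinearMap.finrank_range_of_inj hinj, Module.finrank_fin_fun]

end SmallestSingularValue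

lemma IsThinSVD.sv_mul_sqrt_mul_vnorm_le {n d k p : ℕ} {A : Matrix (Fin n) (Fin d) ℝ}
    {U : Matrix (Fin n) (Fin p) ℝ} {s : Fin p → ℝ} {V : Matrix (Fin d) (Fin p) ℝ}
    (hA : IsThinSVD A U s V) (hk : k ≤ p) {R : Matrix (Fin d) (Fin k) ℝ} (hR : Rᵀ * R = 1)
    {ν : ℝ} (hdist : d2 R (firstCols V k hk) ≤ ν) (x : Fin k → ℝ) :
    sv s k * √(1 - ν ^ 2) * vnorm x ≤ vnorm ((A * R) *ᵥ x) :=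
  calc sv s k * √(1 - ν ^ 2) * vnorm x
      ≤ sv s k * vnorm ((firstCols V k hk)ᵀ *ᵥ (R *ᵥ x)) := by
        rw [mul_assoc]
        exact mul_le_mul_of_nonneg_left
          (sqrt_one_sub_sq_mul_vnorm_le hR (firstCols_transpose_mul_self hA.2.1 hk) hdist x)
          (sv_nonneg hA.2.2.2.1 k)
    _ ≤ vnorm (A *ᵥ (R *ᵥ x)) := hA.sv_mul_vnorm_le hk _
    _ = vnorm ((A * R) *ᵥ x) := by rw [mulVec_mulVec]

/-- Lemma 11, second part. If `R` has `k` orthonormal columns and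
`d₂(R, V_{A,k}) ≤ ν`, then `σ_min(A R) ≥ σ_k(A) (√(1−ν²) − ν)`; moreover if `ν < 1`
then `rank(A R) = k`. -/
theorem statement5
    {n d k : ℕ} (hk0 : 0 < k)
    (A : Matrix (Fin n) (Fin d) ℝ)
    (UA : Matrix (Fin n) (Fin (min n d)) ℝ) (sA : Fin (min n d) → ℝ)
    (VA : Matrix (Fin d) (Fin (min n d)) ℝ)
    (hSVD : IsThinSVD A UA sA VA)
    (hkrank : k ≤ A.rank) (hkp : k ≤ min n d)
    (R : Matrix (Fin d) (Fin k) ℝ) (hR : Rᵀ * R = 1)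
    (ν : ℝ) (hdist : d2 R (firstCols VA k hkp) ≤ ν) :
    sv sA k * (Real.sqrt (1 - ν ^ 2) - ν) ≤ smin (A * R) ∧
    (ν < 1 → (A * R).rank = k) := by
  have hbound := hSVD.sv_mul_sqrt_mul_vnorm_le hkp hR hdist
  have hsv : 0 ≤ sv sA k := sv_nonneg hSVD.2.2.2.1 k
  have hν : 0 ≤ ν := (d2_nonneg _ _).trans hdist
  refine ⟨?_, fun hν1 => rank_eq_of_mul_vnorm_le ?_ hbound⟩
  · calc sv sA k * (√(1 - ν ^ 2) - ν) ≤ sv sA k * √(1 - ν ^ 2) :=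
          mul_le_mul_of_nonneg_left (by linarith) hsv
      _ ≤ smin (A * R) := le_smin hk0 hbound
  · exact mul_pos (hSVD.sv_pos_of_le_rank hk0 hkrank) (Real.sqrt_pos.2 (by nlinarith))
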